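/- arXiv:2307.08998 — 2 statements merged into one kernel-verified Lean document; each statement's English description precedes it below -/
import Mathlib

section
/- Let i ≥ 1 and k ≥ 2i+1. Then g(P_{2i+1}(u), P_{2i+3}(u), P_{2i+k+1}(u)) = g(P_{2i+1}(u), P_{2i+3}(u)) = P_{2i+1}(u)·P_{2i+3}(u) − P_{2i+1}(u) − P_{2i+3}(u). -/
def pell (u : ℕ) : ℕ → ℕ
  | 0 => 0
  | 1 => 1
  | n + 2 => u * pell u (n + 1) + pell u n

/-! Since `c := P_{2i+k+1}` is itself a combination of `a := P_{2i+1}` and `b := P_{2i+3}`,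
adding it to the generators changes nothing, and the claim reduces to Sylvester's formula
`ab - a - b` for the coprime pair `a, b`. For `k = 2i+1`, `c = P_{4i+2}` is a multiple of `a`;
for `k > 2i+1`, `c ≥ P_{4i+3} ≥ ab` exceeds the Frobenius number of `a, b`. -/

section Frobenius

variable {a b c : ℕ}

theorem isGreatest_not_exists_mul_add_mul_eq (hab : Nat.Coprime a b) (ha : 1 < a) (hb : 1 < b) :
    IsGreatest {m : ℕ | ¬ ∃ x y : ℕ, x * a + y * b = m} (a * b - a - b) := by
  simpa only [FrobeniusNumber, AddSubmonoid.mem_closure_pair, smul_eq_mul] using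
    frobeniusNumber_pair hab ha hb

theorem exists_mul_add_mul_eq_of_mul_le (hab : Nat.Coprime a b) (ha : 1 < a) (hb : 1 < b)
    (hc : a * b ≤ c) : ∃ p q : ℕ, p * a + q * b = c := by
  have hpos : 0 < a * b := by positivity
  by_contra hnot
  have := (isGreatest_not_exists_mul_add_mul_eq hab ha hb).2 hnot
  omega

theorem cast_mul_sub_sub (ha : 1 < a) (hb : 1 < b) :
    ((a * b - a - b : ℕ) : ℤ) = (a : ℤ) * b - a - b := by
  have := Nat.add_le_mul ha hb
  push_cast [Nat.cast_sub (by omega : b ≤ a * b - a), Nat.cast_sub (by omega : a ≤ a * b)]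
  ring

theorem setOf_not_exists_triple_eq_pair (hc : ∃ p q : ℕ, p * a + q * b = c) :
    {m : ℕ | ¬ ∃ x y z : ℕ, x * a + y * b + z * c = m}
      = {m : ℕ | ¬ ∃ x y : ℕ, x * a + y * b = m} := by
  obtain ⟨p, q, rfl⟩ := hc
  ext m
  simp only [Set.mem_ofPred_eq, not_iff_not]
  constructor
  · rintro ⟨x, y, z, rfl⟩
    exact ⟨x + z * p, y + z * q, by ring⟩
  · rintro ⟨x, y, rfl⟩
    exact ⟨x, y, 0, by ring⟩

end Frobenius

theorem pell_add_succ (u m n : ℕ) :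
    pell u (m + n + 1) = pell u (m + 1) * pell u (n + 1) + pell u m * pell u n := by
  induction n using Nat.twoStepInduction with
  | zero => simp [pell]
  | one => simp [pell]; ring
  | more n ih₁ ih₂ =>
    rw [show m + (n + 2) + 1 = (m + n + 1) + 2 by ring, pell,
      show m + n + 1 + 1 = m + (n + 1) + 1 by ring, ih₁, ih₂]
    simp only [pell]
    ring

theorem pell_dvd_pell_two_mul (u n : ℕ) : pell u n ∣ pell u (2 * n) := by
  cases n with
  | zero => simp
  | succ n =>
    rw [show 2 * (n + 1) = (n + 1) + n + 1 by ring, pell_add_succ]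
    exact ⟨pell u (n + 2) + pell u n, by ring⟩

theorem pell_mul_pell_le (u m n : ℕ) : pell u (m + 1) * pell u (n + 1) ≤ pell u (m + n + 1) :=
  (pell_add_succ u m n).ge.trans' le_self_add

theorem pell_monotone {u : ℕ} (hu : 1 ≤ u) : Monotone (pell u) := by
  refine monotone_nat_of_le_succ fun n => ?_
  cases n with
  | zero => simp [pell]
  | succ n =>
    rw [pell]
    nlinarith

theorem two_le_pell {u : ℕ} (hu : 1 ≤ u) {n : ℕ} (hn : 3 ≤ n) : 2 ≤ pell u n :=
  calc 2 ≤ u * (u * 1 + 0) + 1 := by nlinarith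
    _ = pell u 3 := rfl
    _ ≤ pell u n := pell_monotone hu hn

theorem coprime_pell_succ (u n : ℕ) : Nat.Coprime (pell u n) (pell u (n + 1)) := by
  induction n with
  | zero => simp [pell]
  | succ n ih =>
    rw [pell, Nat.coprime_mul_right_add_right]
    exact ih.symm

theorem coprime_pell_odd_param (u n : ℕ) : Nat.Coprime (pell u (2 * n + 1)) u := by
  induction n with
  | zero => simp [pell]
  | succ n ih =>
    rw [show 2 * (n + 1) + 1 = (2 * n + 1) + 2 by ring, pell, Nat.coprime_mul_left_add_left]
    exact ih

theorem coprime_pell_odd_add_two (u n : ℕ) :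
    Nat.Coprime (pell u (2 * n + 1)) (pell u (2 * n + 3)) := by
  rw [pell, Nat.coprime_add_self_right]
  exact (coprime_pell_odd_param u n).mul_right (coprime_pell_succ u _)

theorem stmt_15 (u : ℕ) (hu : 1 ≤ u) (i k : ℕ) (hi : 1 ≤ i) (hk : 2 * i + 1 ≤ k) :
    ∃ g : ℕ, IsGreatest {m : ℕ | ¬ ∃ x y z : ℕ,
        x * pell u (2 * i + 1) + y * pell u (2 * i + 3) + z * pell u (2 * i + k + 1) = m} g ∧
      IsGreatest {m : ℕ | ¬ ∃ x y : ℕ,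
        x * pell u (2 * i + 1) + y * pell u (2 * i + 3) = m} g ∧
      (g : ℤ) = (pell u (2 * i + 1) : ℤ) * pell u (2 * i + 3)
        - pell u (2 * i + 1) - pell u (2 * i + 3) := by
  have ha : 1 < pell u (2 * i + 1) := two_le_pell hu (by omega)
  have hb : 1 < pell u (2 * i + 3) := two_le_pell hu (by omega)
  have hab := coprime_pell_odd_add_two u i
  have hc : ∃ p q : ℕ,
      p * pell u (2 * i + 1) + q * pell u (2 * i + 3) = pell u (2 * i + k + 1) := by
    rcases hk.eq_or_lt with rfl | hk
    · obtain ⟨p, hp⟩ := pell_dvd_pell_two_mul u (2 * i + 1)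
      refine ⟨p, 0, ?_⟩
      rw [show 2 * i + (2 * i + 1) + 1 = 2 * (2 * i + 1) by ring, hp]
      ring
    · exact exists_mul_add_mul_eq_of_mul_le hab ha hb
        ((pell_mul_pell_le u (2 * i) (2 * i + 2)).trans (pell_monotone hu (by omega)))
  have hpair := isGreatest_not_exists_mul_add_mul_eq hab ha hb
  exact ⟨_, setOf_not_exists_triple_eq_pair hc ▸ hpair, hpair, cast_mul_sub_sub ha hb⟩
end

section
/- Let k ≥ 4 be even and k < 2i+1. Then (P_k(u)/u)·P_{2i+3}(u) − P_{2i+k+1}(u) = (P_{k-2}(u)/u)·P_{2i+1}(u) > 0, where P_k(u)/u and P_{k-2}(u)/u are integers. -/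
/-!
Everything comes from the identity `P_{j+2} P_{n+2} = u P_{n+j+2} + P_j P_n`, which holds for all
`j, n` because both sides satisfy the Pell recurrence in `n`. For even `j` the index-`j` and
index-`(j+2)` terms are divisible by `u`, so dividing by `u` gives the equation; the right-hand side
`(P_{k-2}/u) P_{2i+1}` is positive as soon as `k - 2 ≥ 2`.
-/

section

variable (u : ℕ)

@[simp] lemma pell_zero : pell u 0 = 0 := rfl

@[simp] lemma pell_one : pell u 1 = 1 := rfl

lemma pell_add_two (n : ℕ) : pell u (n + 2) = u * pell u (n + 1) + pell u n := rfl

lemma pell_pos {u : ℕ} (hu : 0 < u) : ∀ {n : ℕ}, 0 < n → 0 < pell u n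
  | 1, _ => Nat.one_pos
  | n + 2, _ => by
    rw [pell_add_two]
    exact Nat.add_pos_left (Nat.mul_pos hu (pell_pos hu n.succ_pos)) _

lemma pell_dvd_two_mul : ∀ m : ℕ, u ∣ pell u (2 * m)
  | 0 => dvd_zero u
  | m + 1 => by
    rw [show 2 * (m + 1) = 2 * m + 2 by ring, pell_add_two]
    exact dvd_add (dvd_mul_right u _) (pell_dvd_two_mul m)

lemma pell_dvd_of_even {j : ℕ} (hj : Even j) : u ∣ pell u j := by
  obtain ⟨m, rfl⟩ := hj
  simpa [two_mul] using pell_dvd_two_mul u m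

lemma pell_add_two_mul_add_two (j : ℕ) : ∀ n : ℕ,
    pell u (j + 2) * pell u (n + 2) = u * pell u (n + j + 2) + pell u j * pell u n
  | 0 => by simp [pell_add_two, mul_comm]
  | 1 => by
    rw [show 1 + j + 2 = j + 3 by ring, pell_add_two u (j + 1), pell_add_two u j]
    simp [pell_add_two]
    ring
  | n + 2 => by
    have ih₀ := pell_add_two_mul_add_two j n
    have ih₁ := pell_add_two_mul_add_two j (n + 1)
    rw [show n + 1 + 2 = n + 3 by ring, show n + 1 + j + 2 = n + j + 3 by ring] at ih₁
    rw [show n + 2 + 2 = n + 4 by ring, show n + 2 + j + 2 = n + j + 4 by ring,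
      pell_add_two u (n + 2), pell_add_two u (n + j + 2)]
    linear_combination u * ih₁ + ih₀ - pell u j * pell_add_two u n

lemma pell_div_mul_add_two {u : ℕ} (hu : 0 < u) {j : ℕ} (hj : Even j) (n : ℕ) :
    pell u (j + 2) / u * pell u (n + 2) = pell u (n + j + 2) + pell u j / u * pell u n := by
  have hj₂ : u ∣ pell u (j + 2) := pell_dvd_of_even u (hj.add even_two)
  apply Nat.eq_of_mul_eq_mul_left hu
  rw [mul_add, ← mul_assoc, ← mul_assoc, Nat.mul_div_cancel' hj₂,
    Nat.mul_div_cancel' (pell_dvd_of_even u hj)]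
  exact pell_add_two_mul_add_two u j n

end

theorem stmt_17_general (u : ℕ) (hu : 1 ≤ u) (i k : ℕ) (hk4 : 4 ≤ k) (hkeven : Even k) :
    u ∣ pell u k ∧ u ∣ pell u (k - 2) ∧
      ((pell u k / u : ℕ) : ℤ) * pell u (2 * i + 3) - pell u (2 * i + k + 1)
        = ((pell u (k - 2) / u : ℕ) : ℤ) * pell u (2 * i + 1) ∧
      0 < ((pell u k / u : ℕ) : ℤ) * pell u (2 * i + 3) - pell u (2 * i + k + 1) := by
  obtain ⟨j, rfl⟩ : ∃ j, k = j + 2 := ⟨k - 2, by omega⟩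
  have hj : Even j := by simpa [Nat.even_add] using hkeven
  have hdvd : u ∣ pell u j := pell_dvd_of_even u hj
  have hid := pell_div_mul_add_two hu hj (2 * i + 1)
  rw [show 2 * i + 1 + j + 2 = 2 * i + (j + 2) + 1 by ring] at hid
  have hquot : 0 < pell u j / u :=
    Nat.div_pos (Nat.le_of_dvd (pell_pos hu (by omega)) hdvd) hu
  have hrhs : 0 < pell u j / u * pell u (2 * i + 1) := Nat.mul_pos hquot (pell_pos hu (by omega))
  simp only [Nat.add_sub_cancel]
  rw [← Nat.cast_mul, ← Nat.cast_mul, hid, Nat.cast_add, add_sub_cancel_left]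
  exact ⟨pell_dvd_of_even u hkeven, hdvd, rfl, by exact_mod_cast hrhs⟩

theorem stmt_17 (u : ℕ) (hu : 1 ≤ u) (i k : ℕ) (hk4 : 4 ≤ k) (hkeven : Even k)
    (hk : k < 2 * i + 1) :
    u ∣ pell u k ∧ u ∣ pell u (k - 2) ∧
      ((pell u k / u : ℕ) : ℤ) * pell u (2 * i + 3) - pell u (2 * i + k + 1)
        = ((pell u (k - 2) / u : ℕ) : ℤ) * pell u (2 * i + 1) ∧
      0 < ((pell u k / u : ℕ) : ℤ) * pell u (2 * i + 3) - pell u (2 * i + k + 1) :=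
  stmt_17_general u hu i k hk4 hkeven
end
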